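/- arXiv:2309.17281 — 2 statements merged into one kernel-verified Lean document; each statement's English description precedes it below -/
import Mathlib

section
/- If K₁ and K₂ are d×d positive semi-definite real matrices with all diagonal entries equal to 1, then the matrix-based α-order mutual information satisfies I_α(K₁; K₂) ≤ log d. -/
open Matrix Real

/-- Eigenvalues of a matrix (as given by the spectral theorem when it is Hermitian). -/
noncomputable def eigs {d : ℕ} (K : Matrix (Fin d) (Fin d) ℝ) : Fin d → ℝ :=
  if h : K.IsHermitian then h.eigenvalues else 0

/-- Von Neumann (matrix) entropy `H₁(K) = -tr((K/d) log (K/d))`, via the spectrum. -/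
noncomputable def vnEntropy {d : ℕ} (K : Matrix (Fin d) (Fin d) ℝ) : ℝ :=
  -∑ i, (eigs K i / d) * Real.log (eigs K i / d)

/-- Matrix-based α-order Rényi entropy `H_α(K) = (1/(1-α)) log tr((K/d)^α)`,
with the case α = 1 being the von Neumann entropy. -/
noncomputable def mEntropy {d : ℕ} (α : ℝ) (K : Matrix (Fin d) (Fin d) ℝ) : ℝ :=
  if α = 1 then vnEntropy K
  else (1 / (1 - α)) * Real.log (∑ i, (eigs K i / d) ^ α)

/-- Matrix logarithm of a Hermitian matrix via functional calculus. -/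
noncomputable def mlog {d : ℕ} (K : Matrix (Fin d) (Fin d) ℝ) : Matrix (Fin d) (Fin d) ℝ :=
  if h : K.IsHermitian then h.cfc Real.log else 0

/-- Matrix KL divergence `KL(A‖B) = tr[A(log A - log B)]`. -/
noncomputable def matKL {d : ℕ} (A B : Matrix (Fin d) (Fin d) ℝ) : ℝ :=
  (A * (mlog A - mlog B)).trace

/-!
Both entropies are Rényi entropies of normalised spectra, which are probability vectors because
the diagonals are 1. Write `K₁ = ∑ λₗ vₗ vₗᵀ` and let `w_k` be orthonormal eigenvectors of
`K₁ ⊙ K₂`. Then the eigenvalues of `K₁ ⊙ K₂` are `S λ` with `S k l = (w_k ⊙ vₗ)ᵀ K₂ (w_k ⊙ vₗ)`,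
and `S` is doubly stochastic: nonnegative since `K₂ ⪰ 0`, with unit row and column sums by
orthonormality of both bases and `diag K₂ = 1`. Rényi entropy is Schur-concave (Jensen along
each row of `S`), so `H_α(K₁) ≤ H_α(K₁ ⊙ K₂)`; averaging by the uniform doubly stochastic matrix
gives `H_α(K₂) ≤ log d`.
-/

namespace OrthonormalBasis
variable {ι n : Type*} [Fintype ι] [Fintype n]

theorem sum_apply_mul_apply [DecidableEq n] (b : OrthonormalBasis ι ℝ (EuclideanSpace ℝ n))
    (i j : n) : ∑ l, b l i * b l j = (1 : Matrix n n ℝ) i j := by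
  have := b.sum_inner_mul_inner (EuclideanSpace.single i 1) (EuclideanSpace.single j 1)
  simp only [EuclideanSpace.inner_single_left, EuclideanSpace.inner_single_right,
    PiLp.single_apply, map_one, one_mul, conj_trivial] at this
  rw [one_apply, this]
  exact if_congr eq_comm rfl rfl

theorem sum_apply_sq (b : OrthonormalBasis ι ℝ (EuclideanSpace ℝ n)) (l : ι) :
    ∑ i, b l i ^ 2 = 1 := by
  simpa [b.orthonormal.1 l] using (EuclideanSpace.real_norm_sq_eq (b l)).symm

theorem sum_dotProduct_mul_mulVec_mul [DecidableEq n]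
    (b : OrthonormalBasis ι ℝ (EuclideanSpace ℝ n)) (B : Matrix n n ℝ) (x : n → ℝ) :
    ∑ l, (x * ⇑(b l)) ⬝ᵥ B *ᵥ (x * ⇑(b l)) = ∑ i, B i i * x i ^ 2 :=
  calc ∑ l, (x * ⇑(b l)) ⬝ᵥ B *ᵥ (x * ⇑(b l))
      = ∑ i, ∑ j, x i * B i j * x j * ∑ l, b l i * b l j := by
        simp only [dotProduct, mulVec, Pi.mul_apply, Finset.mul_sum]
        rw [← Finset.sum_comm_cycle]
        exact Finset.sum_congr rfl fun i _ => Finset.sum_congr rfl fun j _ =>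
          Finset.sum_congr rfl fun l _ => by ring
    _ = ∑ i, B i i * x i ^ 2 := by
        simp only [b.sum_apply_mul_apply, one_apply, mul_ite, mul_one, mul_zero,
          Finset.sum_ite_eq, Finset.mem_univ, if_true]
        exact Finset.sum_congr rfl fun i _ => by ring

end OrthonormalBasis

namespace Matrix.IsHermitian
variable {n : Type*} [Fintype n] [DecidableEq n] {A B : Matrix n n ℝ}

theorem apply_eq_sum_eigenvalues_mul (hA : A.IsHermitian) (i j : n) :
    A i j = ∑ l, hA.eigenvalues l * hA.eigenvectorBasis l i * hA.eigenvectorBasis l j := by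
  conv_lhs => rw [hA.spectral_theorem, Unitary.conjStarAlgAut_apply]
  simp [mul_apply, diagonal_apply, mul_comm]

theorem eigenvalues_eq_dotProduct (hA : A.IsHermitian) (k : n) :
    hA.eigenvalues k = ⇑(hA.eigenvectorBasis k) ⬝ᵥ A *ᵥ ⇑(hA.eigenvectorBasis k) := by
  simpa using hA.eigenvalues_eq k

theorem sum_eigenvalues_eq_trace (hA : A.IsHermitian) : ∑ i, hA.eigenvalues i = A.trace := by
  simp [hA.trace_eq_sum_eigenvalues]

theorem dotProduct_hadamard_mulVec (hA : A.IsHermitian) (B : Matrix n n ℝ) (x : n → ℝ) :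
    x ⬝ᵥ (A ⊙ B) *ᵥ x = ∑ l, hA.eigenvalues l *
      ((x * ⇑(hA.eigenvectorBasis l)) ⬝ᵥ B *ᵥ (x * ⇑(hA.eigenvectorBasis l))) := by
  simp only [dotProduct, mulVec, hadamard_apply, hA.apply_eq_sum_eigenvalues_mul, Pi.mul_apply,
    Finset.mul_sum, Finset.sum_mul]
  rw [Finset.sum_comm_cycle]
  exact Finset.sum_congr rfl fun l _ => Finset.sum_congr rfl fun i _ =>
    Finset.sum_congr rfl fun j _ => by ring

theorem exists_mem_doublyStochastic_eigenvalues_hadamard (hA : A.IsHermitian)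
    (hB : B.PosSemidef) (hB₁ : ∀ i, B i i = 1) :
    ∃ S ∈ doublyStochastic ℝ n,
      (hA.hadamard hB.isHermitian).eigenvalues = S *ᵥ hA.eigenvalues := by
  set v := hA.eigenvectorBasis
  set w := (hA.hadamard hB.isHermitian).eigenvectorBasis
  refine ⟨of fun k l => (⇑(w k) * ⇑(v l)) ⬝ᵥ B *ᵥ (⇑(w k) * ⇑(v l)), ?_, ?_⟩
  · refine mem_doublyStochastic_iff_sum.2 ⟨fun k l => ?_, fun k => ?_, fun l => ?_⟩
    · simpa using hB.dotProduct_mulVec_nonneg (⇑(w k) * ⇑(v l))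
    · simp [v.sum_dotProduct_mul_mulVec_mul, hB₁, w.sum_apply_sq]
    · simp_rw [of_apply, mul_comm (⇑(w _)) (⇑(v l))]
      simp [w.sum_dotProduct_mul_mulVec_mul, hB₁, v.sum_apply_sq]
  · ext k
    rw [eigenvalues_eq_dotProduct, hA.dotProduct_hadamard_mulVec]
    exact Finset.sum_congr rfl fun l _ => mul_comm _ _

end Matrix.IsHermitian

section Majorization
variable {ι : Type*} [Fintype ι] [DecidableEq ι] {S : Matrix ι ι ℝ} {p : ι → ℝ}

theorem ConvexOn.sum_comp_mulVec_le {s : Set ℝ} {f : ℝ → ℝ} (hf : ConvexOn ℝ s f)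
    (hS : S ∈ doublyStochastic ℝ ι) (hp : ∀ i, p i ∈ s) :
    ∑ i, f ((S *ᵥ p) i) ≤ ∑ i, f (p i) :=
  calc ∑ i, f ((S *ᵥ p) i)
      ≤ ∑ i, ∑ j, S i j * f (p j) := Finset.sum_le_sum fun i _ =>
        hf.map_sum_le (fun j _ => nonneg_of_mem_doublyStochastic hS)
          (sum_row_of_mem_doublyStochastic hS i) fun j _ => hp j
    _ = ∑ j, f (p j) := by
        rw [Finset.sum_comm]
        simp [← Finset.sum_mul, sum_col_of_mem_doublyStochastic hS]

theorem ConcaveOn.sum_le_sum_comp_mulVec {s : Set ℝ} {f : ℝ → ℝ} (hf : ConcaveOn ℝ s f)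
    (hS : S ∈ doublyStochastic ℝ ι) (hp : ∀ i, p i ∈ s) :
    ∑ i, f (p i) ≤ ∑ i, f ((S *ᵥ p) i) := by
  simpa using hf.neg.sum_comp_mulVec_le hS hp

end Majorization

section Renyi
variable {ι : Type*} [Fintype ι] {p : ι → ℝ}

noncomputable def renyiEntropy (α : ℝ) (p : ι → ℝ) : ℝ :=
  if α = 1 then -∑ i, p i * log (p i) else 1 / (1 - α) * log (∑ i, p i ^ α)

theorem sum_rpow_pos_of_sum_eq_one (α : ℝ) (hp₀ : ∀ i, 0 ≤ p i) (hp₁ : ∑ i, p i = 1) :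
    0 < ∑ i, p i ^ α := by
  obtain ⟨i, -, hi⟩ := Finset.exists_lt_of_sum_lt (s := Finset.univ) (f := 0) (g := p)
    (by simp [hp₁])
  exact Finset.sum_pos' (fun j _ => rpow_nonneg (hp₀ j) α)
    ⟨i, Finset.mem_univ i, rpow_pos_of_pos hi α⟩

theorem renyiEntropy_le_renyiEntropy_mulVec [DecidableEq ι] {α : ℝ} (hα : 0 ≤ α)
    {S : Matrix ι ι ℝ} (hS : S ∈ doublyStochastic ℝ ι) (hp₀ : ∀ i, 0 ≤ p i)
    (hp₁ : ∑ i, p i = 1) : renyiEntropy α p ≤ renyiEntropy α (S *ᵥ p) := by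
  have hSp₀ : ∀ i, 0 ≤ (S *ᵥ p) i := fun i => Finset.sum_nonneg fun j _ =>
    mul_nonneg (nonneg_of_mem_doublyStochastic hS) (hp₀ j)
  have hSp₁ : ∑ i, (S *ᵥ p) i = 1 := (sum_mulVec_of_mem_doublyStochastic hS).trans hp₁
  unfold renyiEntropy
  split_ifs with h₁
  · exact neg_le_neg (convexOn_mul_log.sum_comp_mulVec_le hS hp₀)
  rcases lt_or_gt_of_ne h₁ with hlt | hgt
  · refine mul_le_mul_of_nonneg_left (log_le_log (sum_rpow_pos_of_sum_eq_one α hp₀ hp₁) ?_)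
      (by rw [one_div_nonneg]; linarith)
    exact (concaveOn_rpow hα hlt.le).sum_le_sum_comp_mulVec hS hp₀
  · refine mul_le_mul_of_nonpos_left (log_le_log (sum_rpow_pos_of_sum_eq_one α hSp₀ hSp₁) ?_)
      (by rw [one_div_nonpos]; linarith)
    exact (convexOn_rpow hgt.le).sum_comp_mulVec_le hS hp₀

theorem renyiEntropy_const_inv_card [Nonempty ι] (α : ℝ) :
    renyiEntropy α (fun _ : ι => (Fintype.card ι : ℝ)⁻¹) = log (Fintype.card ι) := by
  have hn : (0 : ℝ) < Fintype.card ι := Nat.cast_pos.2 Fintype.card_pos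
  unfold renyiEntropy
  split_ifs with h₁
  · simp [log_inv]
  · rw [Finset.sum_const, Finset.card_univ, nsmul_eq_mul, inv_rpow hn.le,
      log_mul hn.ne' (by positivity), log_inv, log_rpow hn]
    field_simp [sub_ne_zero.2 (Ne.symm h₁)]
    ring

theorem renyiEntropy_le_log_card {α : ℝ} (hα : 0 ≤ α) (hp₀ : ∀ i, 0 ≤ p i)
    (hp₁ : ∑ i, p i = 1) : renyiEntropy α p ≤ log (Fintype.card ι) := by
  classical
  have : Nonempty ι := by
    by_contra h
    simp [not_nonempty_iff.1 h] at hp₁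
  set J : Matrix ι ι ℝ := of fun _ _ => (Fintype.card ι : ℝ)⁻¹
  have hJ : J ∈ doublyStochastic ℝ ι := by
    refine mem_doublyStochastic_iff_sum.2 ⟨fun _ _ => ?_, fun _ => ?_, fun _ => ?_⟩ <;>
      simp [J]
  have hJp : J *ᵥ p = fun _ => (Fintype.card ι : ℝ)⁻¹ := by
    ext i
    simp [J, mulVec, dotProduct, ← Finset.mul_sum, hp₁]
  have := renyiEntropy_le_renyiEntropy_mulVec hα hJ hp₀ hp₁
  rwa [hJp, renyiEntropy_const_inv_card] at this

end Renyi

section MatrixEntropy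
variable {d : ℕ} {α : ℝ} {K : Matrix (Fin d) (Fin d) ℝ}

theorem mEntropy_eq_renyiEntropy :
    mEntropy α K = renyiEntropy α (fun i => eigs K i / d) :=
  rfl

theorem eigs_of_isHermitian (hK : K.IsHermitian) : eigs K = hK.eigenvalues :=
  dif_pos hK

theorem eigs_div_nonneg (hK : K.PosSemidef) (i : Fin d) : 0 ≤ eigs K i / d := by
  rw [eigs_of_isHermitian hK.isHermitian]
  exact div_nonneg (hK.eigenvalues_nonneg i) d.cast_nonneg

theorem sum_eigs_div_eq_one (hd : 0 < d) (hK : K.IsHermitian) (hK₁ : ∀ i, K i i = 1) :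
    ∑ i, eigs K i / d = 1 := by
  rw [← Finset.sum_div, eigs_of_isHermitian hK, hK.sum_eigenvalues_eq_trace]
  simp [trace, hK₁, hd.ne']

theorem mEntropy_le_log_dim (hd : 0 < d) (hα : 0 ≤ α) (hK : K.PosSemidef)
    (hK₁ : ∀ i, K i i = 1) : mEntropy α K ≤ log d := by
  have := renyiEntropy_le_log_card hα (eigs_div_nonneg hK)
    (sum_eigs_div_eq_one hd hK.isHermitian hK₁)
  rwa [Fintype.card_fin] at this

theorem mEntropy_le_mEntropy_hadamard (hd : 0 < d) (hα : 0 ≤ α)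
    {A B : Matrix (Fin d) (Fin d) ℝ}
    (hA : A.PosSemidef) (hA₁ : ∀ i, A i i = 1) (hB : B.PosSemidef) (hB₁ : ∀ i, B i i = 1) :
    mEntropy α A ≤ mEntropy α (A ⊙ B) := by
  obtain ⟨S, hS, hSA⟩ := hA.isHermitian.exists_mem_doublyStochastic_eigenvalues_hadamard hB hB₁
  have hAB : (fun i => eigs (A ⊙ B) i / d) = S *ᵥ fun i => eigs A i / d := by
    rw [eigs_of_isHermitian (hA.isHermitian.hadamard hB.isHermitian), hSA,
      eigs_of_isHermitian hA.isHermitian]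
    ext k
    simp [mulVec, dotProduct, Finset.sum_div, mul_div_assoc]
  rw [mEntropy_eq_renyiEntropy, mEntropy_eq_renyiEntropy, hAB]
  exact renyiEntropy_le_renyiEntropy_mulVec hα hS (eigs_div_nonneg hA)
    (sum_eigs_div_eq_one hd hA.isHermitian hA₁)

end MatrixEntropy

theorem matrix_mutual_information_le_log_dim {d : ℕ} (hd : 0 < d) (α : ℝ) (hα : 0 < α)
    (K₁ K₂ : Matrix (Fin d) (Fin d) ℝ)
    (hK₁ : K₁.PosSemidef) (hK₂ : K₂.PosSemidef)
    (hdiag₁ : ∀ i, K₁ i i = 1) (hdiag₂ : ∀ i, K₂ i i = 1) :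
    mEntropy α K₁ + mEntropy α K₂ - mEntropy α (K₁.hadamard K₂) ≤ Real.log d := by
  have hH₁ := mEntropy_le_mEntropy_hadamard hd hα.le hK₁ hdiag₁ hK₂ hdiag₂
  have hH₂ := mEntropy_le_log_dim hd hα.le hK₂ hdiag₂
  linarith
end

section
/- For d×d PSD matrices K₁, K₂ with unit diagonals and μ > 0, the joint total coding rate is superadditive: log det((μ²+2μ) I_d + K₁ ⊙ K₂) ≥ log det(μ I_d + K₁) + log det(μ I_d + K₂). -/
open Matrix Real

/-!
Write `A = μ I + K₁` and `B = μ I + K₂`. Both are positive definite, and because `K₁`, `K₂` have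
unit diagonal, `A ⊙ B = (μ² + 2μ) I + K₁ ⊙ K₂`. So the claim is `det A · det B ≤ det (A ⊙ B)`,
which follows by chaining Hadamard's inequality `det B ≤ ∏ bᵢᵢ` with Oppenheim's inequality
`det A · ∏ bᵢᵢ ≤ det (A ⊙ B)`. Oppenheim's inequality is proved by induction on the dimension:
splitting off the first index, the Schur complement of `A ⊙ B` is `S(A) ⊙ B₂₂` plus a positive
semidefinite term, and the determinant is monotone in the Loewner order.
-/

open scoped MatrixOrder

namespace Matrix

theorem IsHermitian.toBlocks₂₁_eq {m n α : Type*} [Star α] {M : Matrix (m ⊕ n) (m ⊕ n) α}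
    (hM : M.IsHermitian) : M.toBlocks₂₁ = M.toBlocks₁₂ᴴ := by
  ext i j
  simpa [toBlocks₂₁, toBlocks₁₂] using (hM.apply (.inr i) (.inl j)).symm

section SchurComplement

variable {m n : Type*} [Fintype m] [DecidableEq m]

noncomputable def schurCompl₁₁ {α : Type*} [CommRing α] (M : Matrix (m ⊕ n) (m ⊕ n) α) :
    Matrix n n α :=
  M.toBlocks₂₂ - M.toBlocks₂₁ * M.toBlocks₁₁⁻¹ * M.toBlocks₁₂

theorem schurCompl₁₁_hadamard {α : Type*} [Field α] (A B : Matrix (Unit ⊕ n) (Unit ⊕ n) α) :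
    schurCompl₁₁ (A ⊙ B) = schurCompl₁₁ A ⊙ B.toBlocks₂₂
      + (A.toBlocks₂₁ * A.toBlocks₁₁⁻¹ * A.toBlocks₁₂) ⊙ schurCompl₁₁ B := by
  ext i j
  simp only [schurCompl₁₁, toBlocks₂₂, hadamard_apply, toBlocks₂₁, toBlocks₁₁, inv_subsingleton,
    of_apply, Ring.inverse_eq_inv, _root_.mul_inv_rev, toBlocks₁₂, sub_apply, mul_apply,
    Finset.univ_unique, PUnit.default_eq_unit, diagonal_apply_eq, Finset.sum_singleton, add_apply]
  ring

variable [Fintype n]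

theorem PosDef.posSemidef_toBlocks₂₁_mul_inv_mul {M : Matrix (m ⊕ n) (m ⊕ n) ℝ}
    (hM : M.PosDef) : (M.toBlocks₂₁ * M.toBlocks₁₁⁻¹ * M.toBlocks₁₂).PosSemidef := by
  have hA : M.toBlocks₁₁.PosDef := hM.submatrix Sum.inl_injective
  rw [hM.isHermitian.toBlocks₂₁_eq]
  exact hA.inv.posSemidef.conjTranspose_mul_mul_same _

variable [DecidableEq n]

theorem det_eq_det_toBlocks₁₁_mul_det_schurCompl₁₁ {α : Type*} [CommRing α]
    (M : Matrix (m ⊕ n) (m ⊕ n) α) (h : IsUnit M.toBlocks₁₁.det) :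
    M.det = M.toBlocks₁₁.det * (schurCompl₁₁ M).det := by
  let := invertibleOfIsUnitDet _ h
  conv_lhs => rw [← fromBlocks_toBlocks M]
  rw [det_fromBlocks₁₁, invOf_eq_nonsing_inv, schurCompl₁₁]

theorem PosDef.schurCompl₁₁ {M : Matrix (m ⊕ n) (m ⊕ n) ℝ} (hM : M.PosDef) :
    (schurCompl₁₁ M).PosDef := by
  have hA : M.toBlocks₁₁.PosDef := hM.submatrix Sum.inl_injective
  let := hA.isUnit.invertible
  have hpsd : (Matrix.schurCompl₁₁ M).PosSemidef := by
    rw [Matrix.schurCompl₁₁, hM.isHermitian.toBlocks₂₁_eq, ← PosDef.fromBlocks₁₁ _ _ hA,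
      ← hM.isHermitian.toBlocks₂₁_eq, fromBlocks_toBlocks]
    exact hM.posSemidef
  refine hpsd.posDef_iff_det_ne_zero.mpr fun h0 => hM.det_pos.ne' ?_
  rw [det_eq_det_toBlocks₁₁_mul_det_schurCompl₁₁ M hA.det_pos.ne'.isUnit, h0, mul_zero]

end SchurComplement

variable {n : Type*} [DecidableEq n]

theorem smul_one_add_hadamard_smul_one_add {K₁ K₂ : Matrix n n ℝ} (hK₁ : ∀ i, K₁ i i = 1)
    (hK₂ : ∀ i, K₂ i i = 1) (μ ν : ℝ) :
    (μ • 1 + K₁) ⊙ (ν • 1 + K₂) = (μ * ν + μ + ν) • 1 + K₁ ⊙ K₂ := by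
  ext i j
  rcases eq_or_ne i j with rfl | h
  · simp only [hadamard_apply, add_apply, smul_apply, one_apply_eq, smul_eq_mul, mul_one, hK₁, hK₂]
    ring
  · simp [h]

variable [Fintype n]

theorem PosSemidef.one_le_det_one_add {M : Matrix n n ℝ} (hM : M.PosSemidef) :
    1 ≤ (1 + M).det := by
  have hH : (1 + M).IsHermitian := PosSemidef.one.isHermitian.add hM.isHermitian
  rw [hH.det_eq_prod_eigenvalues]
  refine Finset.one_le_prod fun i _ => ?_
  have hi : hH.eigenvalues i ∈ spectrum ℝ (algebraMap ℝ (Matrix n n ℝ) 1 + M) := by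
    simpa using hH.eigenvalues_mem_spectrum_real i
  rw [← spectrum.singleton_add_eq] at hi
  obtain ⟨_, rfl, x, hx, hxi⟩ := hi
  rw [← hxi]
  simpa using spectrum_nonneg_of_nonneg hM.nonneg hx

theorem PosDef.det_le_det_add {X P : Matrix n n ℝ} (hX : X.PosDef) (hP : P.PosSemidef) :
    X.det ≤ (X + P).det := by
  obtain ⟨B, hB, rfl⟩ := CStarAlgebra.isStrictlyPositive_iff_eq_star_mul_self.mp
    hX.isStrictlyPositive
  have hBdet : IsUnit B.det := (isUnit_iff_isUnit_det B).mp hB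
  have hM : (star B⁻¹ * P * B⁻¹).PosSemidef := hP.conjTranspose_mul_mul_same B⁻¹
  have hfac : star B * B + P = star B * (1 + star B⁻¹ * P * B⁻¹) * B := by
    rw [star_eq_conjTranspose, star_eq_conjTranspose, conjTranspose_nonsing_inv, mul_add, add_mul,
      mul_one, ← mul_assoc, ← mul_assoc, mul_nonsing_inv _ (by simpa using hBdet), one_mul,
      mul_assoc, nonsing_inv_mul _ hBdet, mul_one]
  rw [hfac, det_mul, det_mul, det_mul, mul_right_comm]
  exact le_mul_of_one_le_right (by simpa [← det_mul] using hX.det_pos.le) hM.one_le_det_one_add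

theorem det_mul_prod_diag_le_det_hadamard_of_submatrix {m : Type*} [Fintype m] [DecidableEq m]
    (e : m ≃ n) {A B : Matrix n n ℝ}
    (h : (A.submatrix e e).det * ∏ i, B.submatrix e e i i
      ≤ (A.submatrix e e ⊙ B.submatrix e e).det) :
    A.det * ∏ i, B i i ≤ (A ⊙ B).det := by
  simpa only [← submatrix_hadamard, det_submatrix_equiv_self, submatrix_apply,
    e.prod_comp (fun i => B i i)] using h

theorem det_mul_prod_diag_le_det_hadamard_unit_sum {A B : Matrix (Unit ⊕ n) (Unit ⊕ n) ℝ}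
    (hA : A.PosDef) (hB : B.PosDef)
    (ih : ∀ A₀ B₀ : Matrix n n ℝ, A₀.PosDef → B₀.PosDef →
      A₀.det * ∏ i, B₀ i i ≤ (A₀ ⊙ B₀).det) :
    A.det * ∏ i, B i i ≤ (A ⊙ B).det := by
  set a := A.toBlocks₁₁.det
  set b := B.toBlocks₁₁.det
  have ha : 0 < a := (hA.submatrix Sum.inl_injective).det_pos
  have hb : 0 < b := (hB.submatrix Sum.inl_injective).det_pos
  have hB₂₂ : B.toBlocks₂₂.PosDef := hB.submatrix Sum.inr_injective
  have hab : (A ⊙ B).toBlocks₁₁.det = a * b := by simp [a, b, toBlocks₁₁]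
  calc A.det * ∏ i, B i i
      = (a * b) * ((schurCompl₁₁ A).det * ∏ i, B.toBlocks₂₂ i i) := by
        rw [det_eq_det_toBlocks₁₁_mul_det_schurCompl₁₁ A ha.ne'.isUnit, Fintype.prod_sum_type]
        simp only [a, b, det_unique, Fintype.prod_unique, toBlocks₁₁, toBlocks₂₂, of_apply]
        ring
    _ ≤ (a * b) * (schurCompl₁₁ A ⊙ B.toBlocks₂₂).det := by
        gcongr
        exact ih _ _ hA.schurCompl₁₁ hB₂₂
    _ ≤ (a * b) * (schurCompl₁₁ A ⊙ B.toBlocks₂₂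
          + (A.toBlocks₂₁ * A.toBlocks₁₁⁻¹ * A.toBlocks₁₂) ⊙ schurCompl₁₁ B).det := by
        gcongr
        exact (hA.schurCompl₁₁.hadamard hB₂₂).det_le_det_add
          (hA.posSemidef_toBlocks₂₁_mul_inv_mul.hadamard hB.schurCompl₁₁.posSemidef)
    _ = (A ⊙ B).det := by
        rw [← schurCompl₁₁_hadamard, ← hab,
          det_eq_det_toBlocks₁₁_mul_det_schurCompl₁₁ _ (hab ▸ (mul_pos ha hb).ne'.isUnit)]

theorem PosDef.det_mul_prod_diag_le_det_hadamard {A B : Matrix n n ℝ} (hA : A.PosDef)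
    (hB : B.PosDef) : A.det * ∏ i, B i i ≤ (A ⊙ B).det := by
  suffices h : ∀ (k : ℕ) (A B : Matrix (Fin k) (Fin k) ℝ), A.PosDef → B.PosDef →
      A.det * ∏ i, B i i ≤ (A ⊙ B).det by
    let e := (Fintype.equivFin n).symm
    exact det_mul_prod_diag_le_det_hadamard_of_submatrix e
      (h _ _ _ (hA.submatrix e.injective) (hB.submatrix e.injective))
  intro k
  induction k with
  | zero => simp
  | succ k ih =>
    intro A B hA hB
    let e : Unit ⊕ Fin k ≃ Fin (k + 1) :=
      (Equiv.sumComm _ _).trans ((Equiv.optionEquivSumPUnit _).symm.trans (finSuccEquiv k).symm)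
    exact det_mul_prod_diag_le_det_hadamard_of_submatrix e
      (det_mul_prod_diag_le_det_hadamard_unit_sum (hA.submatrix e.injective)
        (hB.submatrix e.injective) ih)

theorem PosDef.det_le_prod_diag {B : Matrix n n ℝ} (hB : B.PosDef) : B.det ≤ ∏ i, B i i := by
  simpa [hadamard_one] using hB.det_mul_prod_diag_le_det_hadamard PosDef.one

theorem PosDef.det_mul_det_le_det_hadamard {A B : Matrix n n ℝ} (hA : A.PosDef)
    (hB : B.PosDef) : A.det * B.det ≤ (A ⊙ B).det :=
  (mul_le_mul_of_nonneg_left hB.det_le_prod_diag hA.det_pos.le).trans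
    (hA.det_mul_prod_diag_le_det_hadamard hB)

end Matrix

theorem joint_tcr_superadditive_general {d : ℕ} (μ : ℝ) (hμ : 0 < μ)
    (K₁ K₂ : Matrix (Fin d) (Fin d) ℝ)
    (hK₁ : K₁.PosSemidef) (hK₂ : K₂.PosSemidef)
    (hdiag₁ : ∀ i, K₁ i i = 1) (hdiag₂ : ∀ i, K₂ i i = 1) :
    Real.log (μ • (1 : Matrix (Fin d) (Fin d) ℝ) + K₁).det
      + Real.log (μ • (1 : Matrix (Fin d) (Fin d) ℝ) + K₂).det
    ≤ Real.log ((μ ^ 2 + 2 * μ) • (1 : Matrix (Fin d) (Fin d) ℝ) + K₁.hadamard K₂).det := by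
  have hA : (μ • 1 + K₁).PosDef := (PosDef.one.smul hμ).add_posSemidef hK₁
  have hB : (μ • 1 + K₂).PosDef := (PosDef.one.smul hμ).add_posSemidef hK₂
  have hμ' : μ ^ 2 + 2 * μ = μ * μ + μ + μ := by ring
  rw [hμ', ← smul_one_add_hadamard_smul_one_add hdiag₁ hdiag₂,
    ← Real.log_mul hA.det_pos.ne' hB.det_pos.ne']
  exact Real.log_le_log (mul_pos hA.det_pos hB.det_pos) (hA.det_mul_det_le_det_hadamard hB)

theorem joint_tcr_superadditive {d : ℕ} (hd : 0 < d) (μ : ℝ) (hμ : 0 < μ)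
    (K₁ K₂ : Matrix (Fin d) (Fin d) ℝ)
    (hK₁ : K₁.PosSemidef) (hK₂ : K₂.PosSemidef)
    (hdiag₁ : ∀ i, K₁ i i = 1) (hdiag₂ : ∀ i, K₂ i i = 1) :
    Real.log (μ • (1 : Matrix (Fin d) (Fin d) ℝ) + K₁).det
      + Real.log (μ • (1 : Matrix (Fin d) (Fin d) ℝ) + K₂).det
    ≤ Real.log ((μ ^ 2 + 2 * μ) • (1 : Matrix (Fin d) (Fin d) ℝ) + K₁.hadamard K₂).det :=
  joint_tcr_superadditive_general μ hμ K₁ K₂ hK₁ hK₂ hdiag₁ hdiag₂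
end
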